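/- Loynes's lemma: Let (Ω, F, P, θ) be an ergodic measure-preserving system with θ invertible, and let Z : Ω → ℝ be integrable with E[Z] < 0. Define W_0 = 0 and W_{n+1} = max(W_n ∘ θ⁻¹ + Z ∘ θ⁻¹, 0). Then (W_n) is nondecreasing a.s. and its a.s. limit W is finite almost surely and satisfies W ∘ θ = max(W + Z, 0) a.s. -/

import Mathlib

/-!
The `W n` are nondecreasing and integrable, and `W (n + 1) ∘ θ = max (W n + Z) 0` shows that the
event `{sup_n W n = ∞}` is exactly `θ`-invariant, hence trivial by ergodicity. If it had full
measure, the increments `W (n + 1) ∘ θ - W n = max Z (-W n)` would have nonnegative mean, since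
`θ` preserves `P` and `W n ≤ W (n + 1)`, while converging dominatedly to `Z`; this would force
`E[Z] ≥ 0`. So `W n` is a.s. bounded, and passing to the limit in the recursion gives the
fixed-point equation for `W = sup_n W n`.
-/

open MeasureTheory Filter Set Topology

theorem bddAbove_range_iff_of_succ_eq_max {a b : ℕ → ℝ} {c : ℝ} (h0 : b 0 = 0)
    (hsucc : ∀ n, b (n + 1) = max (a n + c) 0) :
    BddAbove (range b) ↔ BddAbove (range a) := by
  constructor
  · rintro ⟨M, hM⟩
    refine ⟨M - c, forall_mem_range.2 fun n => ?_⟩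
    have := hM (mem_range_self (n + 1))
    rw [hsucc] at this
    linarith [le_max_left (a n + c) 0]
  · rintro ⟨M, hM⟩
    refine ⟨max (M + c) 0, forall_mem_range.2 fun n => ?_⟩
    cases n with
    | zero => simp [h0]
    | succ n => rw [hsucc]; gcongr; exact hM (mem_range_self n)

theorem tendsto_of_succ_eq_max {a b : ℕ → ℝ} {c L : ℝ}
    (hsucc : ∀ n, b (n + 1) = max (a n + c) 0) (ha : Tendsto a atTop (𝓝 L)) :
    Tendsto b atTop (𝓝 (max (L + c) 0)) := by
  rw [← tendsto_add_atTop_iff_nat 1, funext hsucc]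
  exact (ha.add_const c).max tendsto_const_nhds

theorem not_bddAbove_range_iff_forall_nat {f : ℕ → ℝ} :
    ¬BddAbove (range f) ↔ ∀ m : ℕ, ∃ k, (m : ℝ) < f k := by
  rw [not_bddAbove_iff]
  constructor
  · intro h m
    obtain ⟨_, ⟨k, rfl⟩, hk⟩ := h m
    exact ⟨k, hk⟩
  · intro h x
    obtain ⟨k, hk⟩ := h ⌈x⌉₊
    exact ⟨f k, mem_range_self k, (Nat.le_ceil x).trans_lt hk⟩

section Measure

variable {Ω : Type*} [MeasurableSpace Ω] {μ : Measure Ω}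

theorem nullMeasurableSet_not_bddAbove_range {f : ℕ → Ω → ℝ} (hf : ∀ n, AEMeasurable (f n) μ) :
    NullMeasurableSet {ω | ¬BddAbove (range fun n => f n ω)} μ := by
  simp_rw [not_bddAbove_range_iff_forall_nat, ofPred_forall, ofPred_exists]
  exact .iInter fun m => .iUnion fun k => nullMeasurableSet_lt aemeasurable_const (hf k)

theorem MeasureTheory.MeasurePreserving.integral_comp_of_aestronglyMeasurable {θ : Ω → Ω}
    (hθ : MeasurePreserving θ μ μ) {g : Ω → ℝ} (hg : AEStronglyMeasurable g μ) :
    ∫ ω, g (θ ω) ∂μ = ∫ ω, g ω ∂μ := by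
  rw [← integral_map hθ.aemeasurable (by rwa [hθ.map_eq]), hθ.map_eq]

theorem tendsto_integral_max_neg {Z : Ω → ℝ} (hZ : Integrable Z μ) {V : ℕ → Ω → ℝ}
    (hV : ∀ n, AEStronglyMeasurable (V n) μ) (hV0 : ∀ n, 0 ≤ᵐ[μ] V n)
    (htop : ∀ᵐ ω ∂μ, Tendsto (fun n => V n ω) atTop atTop) :
    Tendsto (fun n => ∫ ω, max (Z ω) (-V n ω) ∂μ) atTop (𝓝 (∫ ω, Z ω ∂μ)) := by
  refine tendsto_integral_of_dominated_convergence (fun ω => |Z ω|)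
    (fun n => hZ.1.sup (hV n).neg) hZ.abs (fun n => ?_) ?_
  · filter_upwards [hV0 n] with ω hω
    rw [Real.norm_eq_abs, abs_le]
    constructor
    · exact (neg_abs_le _).trans (le_max_left _ _)
    · exact max_le (le_abs_self _) ((neg_nonpos.2 hω).trans (abs_nonneg _))
  · filter_upwards [htop] with ω hω
    refine tendsto_const_nhds.congr' ?_
    filter_upwards [hω.eventually_ge_atTop (-Z ω)] with n hn
    exact (max_eq_left (by linarith)).symm

end Measure

namespace Loynes

variable {Ω : Type*} {θ ι : Ω → Ω} {Z : Ω → ℝ} {W : ℕ → Ω → ℝ}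
  (hW0 : ∀ ω, W 0 ω = 0) (hWrec : ∀ n ω, W (n + 1) ω = max (W n (ι ω) + Z (ι ω)) 0)
  (hinv : Function.LeftInverse ι θ)
include hW0 hWrec

theorem monotone (ω : Ω) : Monotone fun n => W n ω := by
  refine monotone_nat_of_le_succ fun n => ?_
  induction n generalizing ω with
  | zero => rw [hW0, hWrec]; exact le_max_right _ _
  | succ n ih => rw [hWrec (n + 1), hWrec n]; gcongr; exact ih _

theorem nonneg (n : ℕ) (ω : Ω) : 0 ≤ W n ω :=
  hW0 ω ▸ monotone hW0 hWrec ω n.zero_le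

omit hW0 in
include hinv in
theorem succ_apply_of_leftInverse (n : ℕ) (ω : Ω) :
    W (n + 1) (θ ω) = max (W n ω + Z ω) 0 := by
  rw [hWrec, hinv ω]

include hinv in
theorem bddAbove_range_comp_iff (ω : Ω) :
    BddAbove (range fun n => W n (θ ω)) ↔ BddAbove (range fun n => W n ω) :=
  bddAbove_range_iff_of_succ_eq_max (hW0 _) (succ_apply_of_leftInverse hWrec hinv · ω)

variable [MeasurableSpace Ω] {P : Measure Ω}

theorem integrable (hι : MeasurePreserving ι P P) (hZ : Integrable Z P) (n : ℕ) :
    Integrable (W n) P := by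
  induction n with
  | zero => rw [show W 0 = 0 from funext hW0]; exact integrable_zero _ _ _
  | succ n ih =>
    rw [funext (hWrec n)]
    exact (hι.integrable_comp_of_integrable (ih.add hZ)).pos_part

include hinv

theorem integral_nonneg_of_tendsto_atTop (hθ : MeasurePreserving θ P P)
    (hι : MeasurePreserving ι P P) (hZ : Integrable Z P)
    (htop : ∀ᵐ ω ∂P, Tendsto (fun n => W n ω) atTop atTop) :
    0 ≤ ∫ ω, Z ω ∂P := by
  have hW := integrable hW0 hWrec hι hZ
  have hincrement (n : ℕ) :
      ∫ ω, max (Z ω) (-W n ω) ∂P = ∫ ω, W (n + 1) ω ∂P - ∫ ω, W n ω ∂P := by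
    have : (fun ω => max (Z ω) (-W n ω)) = fun ω => W (n + 1) (θ ω) - W n ω := by
      ext ω
      rw [succ_apply_of_leftInverse hWrec hinv, ← max_sub_sub_right]
      ring_nf
    rw [this, integral_sub (f := fun ω => W (n + 1) (θ ω))
      (hθ.integrable_comp_of_integrable (hW (n + 1))) (hW n),
      hθ.integral_comp_of_aestronglyMeasurable (hW (n + 1)).1]
  refine ge_of_tendsto' (tendsto_integral_max_neg hZ (fun n => (hW n).1)
    (fun n => .of_forall (nonneg hW0 hWrec n)) htop) fun n => ?_
  rw [hincrement, sub_nonneg]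
  exact integral_mono (hW n) (hW (n + 1)) fun ω => monotone hW0 hWrec ω n.le_succ

theorem ae_bddAbove (hθ : Ergodic θ P) (hι : MeasurePreserving ι P P) (hZ : Integrable Z P)
    (hZneg : ∫ ω, Z ω ∂P < 0) : ∀ᵐ ω ∂P, BddAbove (range fun n => W n ω) := by
  have hA := nullMeasurableSet_not_bddAbove_range (μ := P)
    fun n => (integrable hW0 hWrec hι hZ n).aemeasurable
  have hθA : θ ⁻¹' {ω | ¬BddAbove (range fun n => W n ω)} =
      {ω | ¬BddAbove (range fun n => W n ω)} :=
    ext fun ω => (bddAbove_range_comp_iff hW0 hWrec hinv ω).not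
  rcases hθ.quasiErgodic.ae_mem_or_ae_notMem₀ hA hθA.eventuallyEq with h | h
  · have htop := h.mono fun ω hω => tendsto_atTop_atTop_of_monotone' (monotone hW0 hWrec ω) hω
    linarith [integral_nonneg_of_tendsto_atTop hW0 hWrec hinv hθ.toMeasurePreserving hι hZ htop]
  · simpa using h

end Loynes

theorem stmt_4_general {Ω : Type*} [MeasurableSpace Ω] (P : Measure Ω) (θ ι : Ω → Ω)
    (hinv₁ : Function.LeftInverse ι θ)
    (hergodic : Ergodic θ P) (hι : MeasurePreserving ι P P)
    (Z : Ω → ℝ) (hZint : Integrable Z P) (hZneg : ∫ ω, Z ω ∂P < 0)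
    (W : ℕ → Ω → ℝ) (hW0 : ∀ ω, W 0 ω = 0)
    (hWrec : ∀ n ω, W (n + 1) ω = max (W n (ι ω) + Z (ι ω)) 0) :
    (∀ᵐ ω ∂P, Monotone fun n => W n ω) ∧
    ∃ Wlim : Ω → ℝ,
      (∀ᵐ ω ∂P, Filter.Tendsto (fun n => W n ω) Filter.atTop (nhds (Wlim ω))) ∧
      (∀ᵐ ω ∂P, Wlim (θ ω) = max (Wlim ω + Z ω) 0) := by
  have hbdd := Loynes.ae_bddAbove hW0 hWrec hinv₁ hergodic hι hZint hZneg
  have hlim (ω : Ω) (hω : BddAbove (range fun n => W n ω)) :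
      Tendsto (fun n => W n ω) atTop (𝓝 (⨆ n, W n ω)) :=
    tendsto_atTop_ciSup (Loynes.monotone hW0 hWrec ω) hω
  refine ⟨.of_forall (Loynes.monotone hW0 hWrec), fun ω => ⨆ n, W n ω, hbdd.mono hlim, ?_⟩
  filter_upwards [hbdd] with ω hω
  have hθω := (Loynes.bddAbove_range_comp_iff hW0 hWrec hinv₁ ω).2 hω
  exact tendsto_nhds_unique (hlim (θ ω) hθω)
    (tendsto_of_succ_eq_max (Loynes.succ_apply_of_leftInverse hWrec hinv₁ · ω) (hlim ω hω))

/-- Loynes's lemma: θ invertible ergodic measure-preserving, Z integrable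
with E[Z] < 0.  With W₀ = 0 and W_{n+1} = max(W_n ∘ θ⁻¹ + Z ∘ θ⁻¹, 0), the sequence (W_n)
is a.s. nondecreasing and converges a.s. to a (finite, ℝ-valued) random variable W
satisfying W ∘ θ = max(W + Z, 0) a.s. -/
theorem stmt_4 {Ω : Type*} [MeasurableSpace Ω] [Nonempty Ω]
    (P : Measure Ω) [IsProbabilityMeasure P]
    (θ ι : Ω → Ω) (hbij : Function.Bijective θ)
    (hinv₁ : Function.LeftInverse ι θ) (hinv₂ : Function.RightInverse ι θ)
    (hergodic : Ergodic θ P) (hι : MeasurePreserving ι P P)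
    (Z : Ω → ℝ) (hZint : Integrable Z P) (hZneg : ∫ ω, Z ω ∂P < 0)
    (W : ℕ → Ω → ℝ) (hW0 : ∀ ω, W 0 ω = 0)
    (hWrec : ∀ n ω, W (n + 1) ω = max (W n (ι ω) + Z (ι ω)) 0) :
    (∀ᵐ ω ∂P, Monotone fun n => W n ω) ∧
    ∃ Wlim : Ω → ℝ,
      (∀ᵐ ω ∂P, Filter.Tendsto (fun n => W n ω) Filter.atTop (nhds (Wlim ω))) ∧
      (∀ᵐ ω ∂P, Wlim (θ ω) = max (Wlim ω + Z ω) 0) :=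
  stmt_4_general P θ ι hinv₁ hergodic hι Z hZint hZneg W hW0 hWrec
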